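/- arXiv:2309.14319 — 3 statements merged into one kernel-verified Lean document; each statement's English description precedes it below -/
import Mathlib

section
/- Let c, β ∈ ℝ, b ∈ ℝ, ξ ∈ ℝ^N, a ∈ ℝ^N with |a| < 1, b = 2(a·ξ)(β+1), and let u : (0,∞) → ℂ be continuously differentiable with u, u' ∈ L²((0,∞), y^c dy) and u ∈ L²((0,∞), y^{c+2β} dy). Then |b ∫₀^∞ Re(ū(y) u'(y)) y^{c+β} dy| ≤ (|a|/√(1−|a|²)) ( ∫₀^∞ |u'(y)|² y^c dy + (β+1)² Q_a(ξ) ∫₀^∞ |u(y)|² y^{c+2β} dy ), where Q_a(ξ) = |ξ|² − |a·ξ|². -/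
open Real MeasureTheory Set

/-!
Young's inequality is applied pointwise instead of after Cauchy–Schwarz. With
`M = |a|/√(1-|a|²)`, Cauchy–Schwarz in `ℝ^N` gives `(a·ξ)² ≤ M² Q_a(ξ)`, and
`2pxw ≤ M(x² + Q w²)` whenever `p² ≤ M² Q`. Taking `x = |u'| y^{c/2}`, `w = |u| y^{c/2+β}`
dominates the integrand on the left by `M` times the integrand on the right.
-/

lemma sq_real_inner_le_sq_div_sqrt_mul {E : Type*} [NormedAddCommGroup E]
    [InnerProductSpace ℝ E] {a : E} (ha : ‖a‖ < 1) (ξ : E) :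
    inner ℝ a ξ ^ 2 ≤ (‖a‖ / √(1 - ‖a‖ ^ 2)) ^ 2 * (‖ξ‖ ^ 2 - inner ℝ a ξ ^ 2) := by
  have hs : 0 < 1 - ‖a‖ ^ 2 := by nlinarith [norm_nonneg a]
  have hCS : inner ℝ a ξ ^ 2 ≤ (‖a‖ * ‖ξ‖) ^ 2 :=
    sq_le_sq' (abs_le.mp (abs_real_inner_le_norm a ξ)).1 (real_inner_le_norm a ξ)
  rw [div_pow, sq_sqrt hs.le, div_mul_eq_mul_div, le_div_iff₀ hs]
  nlinarith

lemma two_mul_mul_mul_le_of_sq_le {A p Q x w : ℝ} (hA : 0 ≤ A) (h : p ^ 2 ≤ A ^ 2 * Q) :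
    2 * p * x * w ≤ A * (x ^ 2 + Q * w ^ 2) := by
  rcases hA.eq_or_lt with rfl | hA
  · have : p = 0 := by nlinarith [sq_nonneg p]
    simp [this]
  · -- `A · (A (x² + Q w²) - 2 p x w) = (A x - p w)² + w² (A² Q - p²)`
    refine le_of_mul_le_mul_left ?_ hA
    nlinarith [sq_nonneg (A * x - p * w), mul_nonneg (sq_nonneg w) (sub_nonneg.mpr h)]

lemma abs_mul_re_conj_mul_mul_rpow_le {A p Q c β y : ℝ} (z w : ℂ) (hy : 0 < y) (hA : 0 ≤ A)
    (h : (p / 2) ^ 2 ≤ A ^ 2 * Q) :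
    |p * (((starRingEnd ℂ) z * w).re * y ^ (c + β))| ≤
      A * (‖w‖ ^ 2 * y ^ c + Q * (‖z‖ ^ 2 * y ^ (c + 2 * β))) := by
  have hc : y ^ c = (y ^ (c / 2)) ^ 2 := by
    rw [← rpow_natCast, ← rpow_mul hy.le]; norm_num
  have hcβ : y ^ (c + 2 * β) = (y ^ (c / 2 + β)) ^ 2 := by
    rw [← rpow_natCast, ← rpow_mul hy.le]; ring_nf
  have hmid : y ^ (c + β) = y ^ (c / 2) * y ^ (c / 2 + β) := by
    rw [← rpow_add hy]; ring_nf
  have hre : |((starRingEnd ℂ) z * w).re| ≤ ‖z‖ * ‖w‖ := by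
    simpa using Complex.abs_re_le_norm ((starRingEnd ℂ) z * w)
  have hyoung := two_mul_mul_mul_le_of_sq_le (x := ‖w‖ * y ^ (c / 2))
    (w := ‖z‖ * y ^ (c / 2 + β)) hA (p := |p / 2|) (by rwa [sq_abs])
  rw [abs_div, abs_two] at hyoung
  calc |p * (((starRingEnd ℂ) z * w).re * y ^ (c + β))|
      = |p| * |((starRingEnd ℂ) z * w).re| * y ^ (c + β) := by
        rw [abs_mul, abs_mul, abs_of_pos (rpow_pos_of_pos hy _), mul_assoc]
    _ ≤ |p| * (‖z‖ * ‖w‖) * y ^ (c + β) := by gcongr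
    _ ≤ A * (‖w‖ ^ 2 * y ^ c + Q * (‖z‖ ^ 2 * y ^ (c + 2 * β))) := by
      rw [hc, hcβ, hmid]
      linarith

theorem stmt_2_general {N : ℕ} (c β b : ℝ) (a ξ : EuclideanSpace ℝ (Fin N)) (ha : ‖a‖ < 1)
    (hb : b = 2 * (inner ℝ a ξ : ℝ) * (β + 1))
    (u : ℝ → ℂ)
    (h2 : IntegrableOn (fun y : ℝ => ‖deriv u y‖ ^ 2 * y ^ c) (Ioi 0))
    (h3 : IntegrableOn (fun y : ℝ => ‖u y‖ ^ 2 * y ^ (c + 2 * β)) (Ioi 0)) :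
    |b * ∫ y in Ioi (0 : ℝ), ((starRingEnd ℂ) (u y) * deriv u y).re * y ^ (c + β)| ≤
      ‖a‖ / Real.sqrt (1 - ‖a‖ ^ 2) *
        ((∫ y in Ioi (0 : ℝ), ‖deriv u y‖ ^ 2 * y ^ c) +
          (β + 1) ^ 2 * (‖ξ‖ ^ 2 - (inner ℝ a ξ : ℝ) ^ 2) *
            ∫ y in Ioi (0 : ℝ), ‖u y‖ ^ 2 * y ^ (c + 2 * β)) := by
  set M := ‖a‖ / √(1 - ‖a‖ ^ 2)
  set Q := (β + 1) ^ 2 * (‖ξ‖ ^ 2 - (inner ℝ a ξ : ℝ) ^ 2)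
  have hM : 0 ≤ M := by positivity
  have hbQ : (b / 2) ^ 2 ≤ M ^ 2 * Q := by
    have := mul_le_mul_of_nonneg_left (sq_real_inner_le_sq_div_sqrt_mul ha ξ) (sq_nonneg (β + 1))
    rw [hb]
    linarith
  rw [← Real.norm_eq_abs, ← integral_const_mul, mul_add, ← mul_assoc M Q, ← integral_const_mul,
    ← integral_const_mul, ← integral_add (h2.const_mul M) (h3.const_mul (M * Q))]
  refine norm_integral_le_of_norm_le (h2.const_mul M |>.add (h3.const_mul (M * Q))) ?_
  filter_upwards [ae_restrict_mem measurableSet_Ioi] with y hy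
  simpa only [Real.norm_eq_abs, mul_add, mul_assoc] using
    abs_mul_re_conj_mul_mul_rpow_le (u y) (deriv u y) hy hM hbQ

/-- Sectoriality estimate: for `b = 2(a·ξ)(β+1)` with `‖a‖ < 1`, and `u` continuously
differentiable on `(0,∞)` with the stated weighted `L²` integrability, the "imaginary part"
term `|b ∫₀^∞ Re(ū u') y^{c+β} dy|` is bounded by `(‖a‖/√(1−‖a‖²))` times the
"real part" `∫₀^∞ |u'|² y^c dy + (β+1)² Q_a(ξ) ∫₀^∞ |u|² y^{c+2β} dy`. -/
theorem stmt_2 {N : ℕ} (c β b : ℝ) (a ξ : EuclideanSpace ℝ (Fin N)) (ha : ‖a‖ < 1)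
    (hb : b = 2 * (inner ℝ a ξ : ℝ) * (β + 1))
    (u : ℝ → ℂ) (hu : ContDiffOn ℝ 1 u (Ioi 0))
    (h1 : IntegrableOn (fun y : ℝ => ‖u y‖ ^ 2 * y ^ c) (Ioi 0))
    (h2 : IntegrableOn (fun y : ℝ => ‖deriv u y‖ ^ 2 * y ^ c) (Ioi 0))
    (h3 : IntegrableOn (fun y : ℝ => ‖u y‖ ^ 2 * y ^ (c + 2 * β)) (Ioi 0))
    (h4 : IntegrableOn
      (fun y : ℝ => ((starRingEnd ℂ) (u y) * deriv u y).re * y ^ (c + β)) (Ioi 0)) :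
    |b * ∫ y in Ioi (0 : ℝ), ((starRingEnd ℂ) (u y) * deriv u y).re * y ^ (c + β)| ≤
      ‖a‖ / Real.sqrt (1 - ‖a‖ ^ 2) *
        ((∫ y in Ioi (0 : ℝ), ‖deriv u y‖ ^ 2 * y ^ c) +
          (β + 1) ^ 2 * (‖ξ‖ ^ 2 - (inner ℝ a ξ : ℝ) ^ 2) *
            ∫ y in Ioi (0 : ℝ), ‖u y‖ ^ 2 * y ^ (c + 2 * β)) :=
  stmt_2_general c β b a ξ ha hb u h2 h3
end

section
/- Let c > −1, ε > 0, and suppose the heat kernel p_B of the one-dimensional Bessel semigroup satisfies |p_B(t,y,ρ)| ≤ C t^{−1/2} ρ^{−c} ((ρ/√t) ∧ 1)^c exp(−|y−ρ|²/(κt)) with respect to the measure ρ^c dρ. Then for every t > 0 the operator f ↦ ∫₀^∞ p_B(t,·,ρ) f(ρ) ρ^c dρ is bounded on L^p((0,∞), y^m dy) for every 1 < p < ∞ with 0 < (m+1)/p < c + 1, with norm bounded uniformly in t. -/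
open Real MeasureTheory Set ENNReal

/-- The weighted measure `y^m dy` on `(0,∞)`. -/
noncomputable def mu15 (m : ℝ) : Measure ℝ :=
  ((volume : Measure ℝ).withDensity (fun y => ENNReal.ofReal (y ^ m))).restrict (Ioi 0)

/-!
The modulus of the operator is dominated by the positive kernel `C k_t(y, ρ) ρ^(-m)` relative to
`μ = y^m dy`, where `k_t(y, ρ) = t^(-1/2) ((ρ/√t) ∧ 1)^c exp(-(y-ρ)²/(κt))`. Schur's test with
the power weight `y^(-σ)` reduces the `L^p(μ)` bound to `∫ k_t(y, ρ) ρ^(-σq) dρ ≲ y^(-σq)` and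
`∫ k_t(y, ρ) y^(m-σp) dy ≲ ρ^(m-σp)`, and `σ` can be chosen so that both hold precisely because
`0 < (m+1)/p < c+1`. Both estimates are invariant under `(y, ρ, t) ↦ (λy, λρ, λ²t)`, so it suffices
to prove them for `t = 1`; there `v^(-α)` differs from `max(u, 1)^(-α)` by at most a factor
`exp(|α| |u - v|)`, which the Gaussian absorbs, and the region `v < 1` contributes a multiple of
`∫₀¹ v^(c-α) dv`.
-/

namespace BesselHeat

theorem log_sub_log_le_abs_sub {x y : ℝ} (hx : 0 < x) (hy : 1 ≤ y) : log x - log y ≤ |x - y| := by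
  have hy0 : 0 < y := by linarith
  calc log x - log y = log (x / y) := (log_div hx.ne' hy0.ne').symm
    _ ≤ x / y - 1 := log_le_sub_one_of_pos (by positivity)
    _ = (x - y) / y := by field_simp
    _ ≤ |x - y| / y := by gcongr; exact le_abs_self _
    _ ≤ |x - y| := div_le_self (abs_nonneg _) hy

theorem rpow_le_rpow_mul_exp_abs_sub {x y : ℝ} (a : ℝ) (hx : 1 ≤ x) (hy : 1 ≤ y) :
    x ^ a ≤ y ^ a * exp (|a| * |x - y|) := by
  have hx0 : 0 < x := by linarith
  have hy0 : 0 < y := by linarith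
  have hlog : |log x - log y| ≤ |x - y| := abs_sub_le_iff.2
    ⟨log_sub_log_le_abs_sub hx0 hy, abs_sub_comm x y ▸ log_sub_log_le_abs_sub hy0 hx⟩
  rw [rpow_def_of_pos hx0, rpow_def_of_pos hy0, ← exp_add, exp_le_exp]
  calc log x * a = log y * a + a * (log x - log y) := by ring
    _ ≤ log y * a + |a| * |x - y| := by
        gcongr log y * a + ?_
        calc a * (log x - log y) ≤ |a * (log x - log y)| := le_abs_self _
          _ = |a| * |log x - log y| := abs_mul _ _
          _ ≤ |a| * |x - y| := by gcongr

theorem rpow_mul_exp_neg_sq_le {x y κ : ℝ} (a : ℝ) (hx : 1 ≤ x) (hy : 1 ≤ y) (hκ : 0 < κ) :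
    x ^ a * exp (-(x - y) ^ 2 / κ) ≤
      exp (κ * a ^ 2 / 2) * y ^ a * exp (-(x - y) ^ 2 / (2 * κ)) := by
  have hexp :
      |a| * |x - y| + -(x - y) ^ 2 / κ ≤ κ * a ^ 2 / 2 + -(x - y) ^ 2 / (2 * κ) := by
    -- AM-GM: `|a| d ≤ κ a² / 2 + d² / (2κ)`
    have h := sq_nonneg (κ * |a| - |x - y|)
    rw [sub_sq, mul_pow, sq_abs, sq_abs] at h
    field_simp
    nlinarith
  calc x ^ a * exp (-(x - y) ^ 2 / κ)
      ≤ y ^ a * exp (|a| * |x - y|) * exp (-(x - y) ^ 2 / κ) := by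
        gcongr; exact rpow_le_rpow_mul_exp_abs_sub a hx hy
    _ ≤ y ^ a * (exp (κ * a ^ 2 / 2) * exp (-(x - y) ^ 2 / (2 * κ))) := by
        rw [mul_assoc, ← exp_add, ← exp_add]; gcongr
    _ = _ := by ring

theorem min_one_rpow_mul_max_one_rpow_neg_le {u : ℝ} (a b : ℝ) (hu : 0 < u)
    (hab : 0 ≤ a + b) :
    min u 1 ^ a * max u 1 ^ (-b) ≤ u ^ (-b) := by
  rcases le_total u 1 with hu1 | hu1
  · rw [min_eq_left hu1, max_eq_right hu1, Real.one_rpow, mul_one]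
    calc u ^ a = u ^ (a + b) * u ^ (-b) := by rw [← rpow_add hu]; ring_nf
      _ ≤ 1 * u ^ (-b) := by gcongr; exact rpow_le_one hu.le hu1 hab
      _ = u ^ (-b) := one_mul _
  · rw [min_eq_right hu1, max_eq_left hu1, Real.one_rpow, one_mul]

theorem lintegral_exp_neg_sub_sq_div (w : ℝ) {κ : ℝ} (hκ : 0 < κ) :
    ∫⁻ v, ENNReal.ofReal (exp (-(v - w) ^ 2 / κ)) = ENNReal.ofReal (√(π * κ)) := by
  have hint : Integrable (fun v : ℝ => exp (-κ⁻¹ * v ^ 2)) :=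
    integrable_exp_neg_mul_sq (inv_pos.2 hκ)
  have hshift : ∀ v, exp (-(v - w) ^ 2 / κ) = exp (-κ⁻¹ * (v + -w) ^ 2) := fun v => by
    congr 1; ring
  simp_rw [hshift]
  rw [lintegral_add_right_eq_self (fun v => ENNReal.ofReal (exp (-κ⁻¹ * v ^ 2))),
    ← ofReal_integral_eq_lintegral_ofReal hint
      (Filter.Eventually.of_forall fun _ => by positivity),
    integral_gaussian, div_inv_eq_mul]

theorem setLIntegral_Ioc_rpow_lt_top {r : ℝ} (hr : -1 < r) :
    ∫⁻ v in Ioc (0 : ℝ) 1, ENNReal.ofReal (v ^ r) < ∞ := by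
  exact (intervalIntegral.intervalIntegrable_rpow' (a := 0) (b := 1) hr).1.lintegral_lt_top

theorem setLIntegral_Ioi_zero_eq_mul_comp_mul_left (f : ℝ → ℝ≥0∞) {s : ℝ} (hs : 0 < s) :
    ∫⁻ v in Ioi 0, f v = ENNReal.ofReal s * ∫⁻ w in Ioi 0, f (s * w) := by
  have hse : MeasurableEmbedding (fun w : ℝ => s * w) :=
    (Homeomorph.mulLeft₀ s hs.ne').toMeasurableEquiv.measurableEmbedding
  have hpre : (fun w : ℝ => s * w) ⁻¹' Ioi 0 = Ioi 0 := by
    ext w; simp [mul_pos_iff_of_pos_left hs]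
  have hmap : ∫⁻ w in Ioi 0, f (s * w) = ∫⁻ v in Ioi 0, f v ∂(volume.map (s * ·)) := by
    rw [Measure.restrict_map hse.measurable measurableSet_Ioi, hse.lintegral_map, hpre]
  rw [hmap, Real.map_volume_mul_left hs.ne', Measure.restrict_smul, lintegral_smul_measure,
    smul_eq_mul, ← mul_assoc, ← ENNReal.ofReal_mul hs.le, abs_of_pos (inv_pos.2 hs),
    mul_inv_cancel₀ hs.ne', ENNReal.ofReal_one, one_mul]

-- Write `v = min v 1 * max v 1` and use that `max · 1` is `1`-Lipschitz.
theorem min_one_rpow_mul_exp_mul_rpow_le {u v κ c α : ℝ} (hv : 0 < v) (hκ : 0 < κ) :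
    min v 1 ^ c * exp (-(u - v) ^ 2 / κ) * v ^ (-α) ≤
      exp (κ * α ^ 2 / 2) * max u 1 ^ (-α) *
        (min v 1 ^ (c - α) * exp (-(max v 1 - max u 1) ^ 2 / (2 * κ))) := by
  have hmin : 0 < min v 1 := lt_min hv one_pos
  have hsplit : min v 1 ^ c * v ^ (-α) = min v 1 ^ (c - α) * max v 1 ^ (-α) := by
    have hv' : v ^ (-α) = min v 1 ^ (-α) * max v 1 ^ (-α) := by
      rw [← mul_rpow hmin.le (by positivity), min_mul_max, mul_one]
    rw [hv', ← mul_assoc, ← rpow_add hmin, sub_eq_add_neg]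
  have hdist : (max v 1 - max u 1) ^ 2 ≤ (u - v) ^ 2 :=
    sq_le_sq.2 (by simpa [abs_sub_comm] using abs_max_sub_max_le_abs v u 1)
  calc min v 1 ^ c * exp (-(u - v) ^ 2 / κ) * v ^ (-α)
      = min v 1 ^ (c - α) * (max v 1 ^ (-α) * exp (-(u - v) ^ 2 / κ)) := by
        rw [← mul_assoc, ← hsplit]; ring
    _ ≤ min v 1 ^ (c - α) * (max v 1 ^ (-α) * exp (-(max v 1 - max u 1) ^ 2 / κ)) := by
        gcongr
    _ ≤ min v 1 ^ (c - α) * (exp (κ * (-α) ^ 2 / 2) * max u 1 ^ (-α) *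
          exp (-(max v 1 - max u 1) ^ 2 / (2 * κ))) := by
        exact mul_le_mul_of_nonneg_left
          (rpow_mul_exp_neg_sq_le (-α) (le_max_right v 1) (le_max_right u 1) hκ) (by positivity)
    _ = _ := by rw [neg_sq]; ring

theorem ofReal_min_one_rpow_mul_exp_le {v w c κ : ℝ} (hv : 0 < v) (hκ : 0 < κ) :
    ENNReal.ofReal (min v 1 ^ c * exp (-(max v 1 - w) ^ 2 / κ)) ≤
      (Ioc 0 1).indicator (fun v => ENNReal.ofReal (v ^ c)) v +
        ENNReal.ofReal (exp (-(v - w) ^ 2 / κ)) := by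
  rcases le_or_gt v 1 with hv1 | hv1
  · rw [min_eq_left hv1, indicator_of_mem (show v ∈ Ioc 0 1 from ⟨hv, hv1⟩)]
    refine le_trans ?_ le_self_add
    gcongr
    exact mul_le_of_le_one_right (rpow_nonneg hv.le _) (exp_le_one_iff.2
      (div_nonpos_of_nonpos_of_nonneg (neg_nonpos.2 (sq_nonneg _)) hκ.le))
  · rw [min_eq_right hv1.le, max_eq_left hv1.le, Real.one_rpow, one_mul]
    exact le_add_self

theorem exists_setLIntegral_min_one_rpow_mul_exp_mul_rpow_le {κ c α : ℝ} (hκ : 0 < κ)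
    (hα : α < c + 1) :
    ∃ A : ℝ, 0 ≤ A ∧ ∀ u : ℝ,
      ∫⁻ v in Ioi 0, ENNReal.ofReal (min v 1 ^ c * exp (-(u - v) ^ 2 / κ) * v ^ (-α)) ≤
        ENNReal.ofReal (A * max u 1 ^ (-α)) := by
  set D := ∫⁻ v in Ioc (0 : ℝ) 1, ENNReal.ofReal (v ^ (c - α))
  have hD : D ≠ ∞ := (setLIntegral_Ioc_rpow_lt_top (by linarith)).ne
  set E := exp (κ * α ^ 2 / 2)
  refine ⟨E * (D.toReal + √(π * (2 * κ))), by positivity, fun u => ?_⟩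
  set ū := max u 1
  have hEū : 0 ≤ E * ū ^ (-α) := mul_nonneg (exp_pos _).le (rpow_nonneg (by positivity) _)
  set g : ℝ → ℝ≥0∞ := fun v =>
    (Ioc 0 1).indicator (fun v => ENNReal.ofReal (v ^ (c - α))) v +
      ENNReal.ofReal (exp (-(v - ū) ^ 2 / (2 * κ)))
  have hpoint : ∀ v ∈ Ioi (0 : ℝ),
      ENNReal.ofReal (min v 1 ^ c * exp (-(u - v) ^ 2 / κ) * v ^ (-α)) ≤
        ENNReal.ofReal (E * ū ^ (-α)) * g v := by
    intro v hv
    refine (ENNReal.ofReal_le_ofReal (min_one_rpow_mul_exp_mul_rpow_le hv hκ)).trans ?_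
    rw [ENNReal.ofReal_mul hEū]
    gcongr
    exact ofReal_min_one_rpow_mul_exp_le hv (by positivity)
  have hg : ∫⁻ v, g v = D + ENNReal.ofReal (√(π * (2 * κ))) := by
    rw [lintegral_add_right _ (by fun_prop), lintegral_indicator measurableSet_Ioc,
      lintegral_exp_neg_sub_sq_div ū (by positivity)]
  calc ∫⁻ v in Ioi 0, ENNReal.ofReal (min v 1 ^ c * exp (-(u - v) ^ 2 / κ) * v ^ (-α))
      ≤ ∫⁻ v in Ioi 0, ENNReal.ofReal (E * ū ^ (-α)) * g v :=
        setLIntegral_mono' measurableSet_Ioi hpoint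
    _ ≤ ∫⁻ v, ENNReal.ofReal (E * ū ^ (-α)) * g v := setLIntegral_le_lintegral _ _
    _ = ENNReal.ofReal (E * ū ^ (-α)) * (D + ENNReal.ofReal (√(π * (2 * κ)))) := by
        rw [lintegral_const_mul' _ _ ofReal_ne_top, hg]
    _ = ENNReal.ofReal (E * ū ^ (-α)) * ENNReal.ofReal (D.toReal + √(π * (2 * κ))) := by
        rw [ENNReal.ofReal_add toReal_nonneg (by positivity), ENNReal.ofReal_toReal hD]
    _ = ENNReal.ofReal (E * (D.toReal + √(π * (2 * κ))) * ū ^ (-α)) := by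
        rw [← ENNReal.ofReal_mul hEū]; congr 1; ring

/-- The kernel hypothesis of the theorem reads
`‖pB t y ρ‖ ≤ C * ρ ^ (-c) * gaussMajorant κ c t y ρ`. -/
noncomputable def gaussMajorant (κ c t y ρ : ℝ) : ℝ :=
  t ^ (-(1 : ℝ) / 2) * min (ρ / √t) 1 ^ c * exp (-(y - ρ) ^ 2 / (κ * t))

theorem sqrt_mul_rpow_neg_one_half {t : ℝ} (ht : 0 < t) : √t * t ^ (-(1 : ℝ) / 2) = 1 := by
  rw [neg_div, rpow_neg ht.le, ← sqrt_eq_rpow, mul_inv_cancel₀ (sqrt_pos.2 ht).ne']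

theorem gaussMajorant_sqrt_mul {t : ℝ} (ht : 0 < t) (κ c x w : ℝ) :
    gaussMajorant κ c t x (√t * w) =
      t ^ (-(1 : ℝ) / 2) * min w 1 ^ c * exp (-(x / √t - w) ^ 2 / κ) := by
  have hs : 0 < √t := sqrt_pos.2 ht
  have hexp : -(x - √t * w) ^ 2 / (κ * t) = -(x / √t - w) ^ 2 / κ := by
    rw [show x - √t * w = √t * (x / √t - w) by rw [mul_sub, mul_div_cancel₀ x hs.ne'],
      mul_pow, sq_sqrt ht.le]
    field_simp
  rw [gaussMajorant, mul_div_cancel_left₀ w hs.ne', hexp]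

theorem exists_setLIntegral_gaussMajorant_mul_rpow_le {κ c₁ c₂ α : ℝ} (hκ : 0 < κ)
    (hα : α < c₁ + 1) (hcα : 0 ≤ c₂ + α) :
    ∃ A : ℝ, ∀ t > 0, ∀ x > 0,
      ∫⁻ v in Ioi 0,
          ENNReal.ofReal (min (x / √t) 1 ^ c₂ * gaussMajorant κ c₁ t x v * v ^ (-α)) ≤
        ENNReal.ofReal (A * x ^ (-α)) := by
  obtain ⟨A, hA0, hA⟩ := exists_setLIntegral_min_one_rpow_mul_exp_mul_rpow_le hκ hα
  refine ⟨A, fun t ht x hx => ?_⟩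
  set s := √t
  have hs : 0 < s := sqrt_pos.2 ht
  set u := x / s
  have hu : 0 < u := div_pos hx hs
  set P := t ^ (-(1 : ℝ) / 2) * s ^ (-α) * min u 1 ^ c₂
  have hP : 0 ≤ P := by positivity
  -- the substitution `v = √t * w` reduces the estimate to the case `t = 1`
  have hscale : ∀ w ∈ Ioi (0 : ℝ),
      ENNReal.ofReal (min u 1 ^ c₂ * gaussMajorant κ c₁ t x (s * w) * (s * w) ^ (-α)) =
        ENNReal.ofReal P *
          ENNReal.ofReal (min w 1 ^ c₁ * exp (-(u - w) ^ 2 / κ) * w ^ (-α)) := by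
    intro w hw
    rw [← ENNReal.ofReal_mul hP, gaussMajorant_sqrt_mul ht, mul_rpow hs.le (le_of_lt hw)]
    congr 1
    ring
  calc ∫⁻ v in Ioi 0, ENNReal.ofReal (min u 1 ^ c₂ * gaussMajorant κ c₁ t x v * v ^ (-α))
      = ENNReal.ofReal s * (ENNReal.ofReal P * ∫⁻ w in Ioi 0,
          ENNReal.ofReal (min w 1 ^ c₁ * exp (-(u - w) ^ 2 / κ) * w ^ (-α))) := by
        rw [setLIntegral_Ioi_zero_eq_mul_comp_mul_left _ hs,
          setLIntegral_congr_fun measurableSet_Ioi hscale, lintegral_const_mul _ (by fun_prop)]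
    _ ≤ ENNReal.ofReal s * (ENNReal.ofReal P * ENNReal.ofReal (A * max u 1 ^ (-α))) := by
        gcongr; exact hA u
    _ = ENNReal.ofReal (s ^ (-α) * A * (min u 1 ^ c₂ * max u 1 ^ (-α))) := by
        rw [← ENNReal.ofReal_mul hP, ← ENNReal.ofReal_mul hs.le]
        congr 1
        linear_combination (s ^ (-α) * A * min u 1 ^ c₂ * max u 1 ^ (-α)) *
          sqrt_mul_rpow_neg_one_half ht
    _ ≤ ENNReal.ofReal (s ^ (-α) * A * u ^ (-α)) := by
        gcongr; exact min_one_rpow_mul_max_one_rpow_neg_le c₂ α hu hcα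
    _ = ENNReal.ofReal (A * x ^ (-α)) := by
        rw [mul_right_comm, ← mul_rpow hs.le hu.le, mul_div_cancel₀ x hs.ne', mul_comm]

theorem min_rpow_mul_gaussMajorant_zero (κ c t x v : ℝ) :
    min (x / √t) 1 ^ c * gaussMajorant κ 0 t x v = gaussMajorant κ c t v x := by
  simp only [gaussMajorant, Real.rpow_zero, mul_one]
  rw [← neg_sq (x - v), neg_sub]
  ring

theorem exists_setLIntegral_gaussMajorant_mul_rpow_le_row {κ c β : ℝ} (hκ : 0 < κ)
    (hβ₀ : 0 ≤ β) (hβ : β < c + 1) :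
    ∃ A : ℝ, ∀ t > 0, ∀ y > 0,
      ∫⁻ ρ in Ioi 0, ENNReal.ofReal (gaussMajorant κ c t y ρ * ρ ^ (-β)) ≤
        ENNReal.ofReal (A * y ^ (-β)) := by
  obtain ⟨A, hA⟩ := exists_setLIntegral_gaussMajorant_mul_rpow_le (c₂ := 0) hκ hβ (by simpa)
  exact ⟨A, fun t ht y hy => by simpa using hA t ht y hy⟩

theorem exists_setLIntegral_gaussMajorant_mul_rpow_le_col {κ c β : ℝ} (hκ : 0 < κ)
    (hβ : β < 1) (hcβ : 0 ≤ c + β) :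
    ∃ A : ℝ, ∀ t > 0, ∀ ρ > 0,
      ∫⁻ y in Ioi 0, ENNReal.ofReal (gaussMajorant κ c t y ρ * y ^ (-β)) ≤
        ENNReal.ofReal (A * ρ ^ (-β)) := by
  obtain ⟨A, hA⟩ :=
    exists_setLIntegral_gaussMajorant_mul_rpow_le (c₁ := 0) (c₂ := c) hκ (by simpa) hcβ
  exact ⟨A, fun t ht ρ hρ => by
    simpa only [min_rpow_mul_gaussMajorant_zero] using hA t ht ρ hρ⟩

section Schur

variable {X : Type*} [MeasurableSpace X] {μ : Measure X} {p q : ℝ}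

theorem lintegral_mul_rpow_le_of_weight (hpq : p.HolderConjugate q) {k F h : X → ℝ≥0∞}
    (hk : AEMeasurable k μ) (hF : AEMeasurable F μ) (hh : AEMeasurable h μ)
    (hh0 : ∀ᵐ x ∂μ, h x ≠ 0) (hhtop : ∀ᵐ x ∂μ, h x ≠ ∞) :
    (∫⁻ x, k x * F x ∂μ) ^ p ≤
      (∫⁻ x, k x * (F x / h x) ^ p ∂μ) * (∫⁻ x, k x * h x ^ q ∂μ) ^ (p / q) := by
  have hp := hpq.pos
  have hq := hpq.symm.pos
  have hfactor :
      ∀ᵐ x ∂μ, k x * F x = (k x ^ (1 / p) * (F x / h x)) * (k x ^ (1 / q) * h x) := by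
    filter_upwards [hh0, hhtop] with x hx0 hxtop
    have hkk : k x ^ (1 / p) * k x ^ (1 / q) = k x := by
      rw [← ENNReal.rpow_add_of_nonneg _ _ (by positivity) (by positivity), one_div, one_div,
        hpq.inv_add_inv_eq_one, ENNReal.rpow_one]
    calc k x * F x = (k x ^ (1 / p) * k x ^ (1 / q)) * (F x / h x * h x) := by
          rw [hkk, ENNReal.div_mul_cancel hx0 hxtop]
      _ = _ := by ring
  have hpow : ∀ (a b : ℝ≥0∞) {r : ℝ}, 0 < r → (a ^ (1 / r) * b) ^ r = a * b ^ r := by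
    intro a b r hr
    rw [ENNReal.mul_rpow_of_nonneg _ _ hr.le, ← ENNReal.rpow_mul, one_div_mul_cancel hr.ne',
      ENNReal.rpow_one]
  have hholder := ENNReal.lintegral_mul_le_Lp_mul_Lq μ hpq
    ((hk.pow_const (1 / p)).mul (hF.div hh)) ((hk.pow_const (1 / q)).mul hh)
  simp only [Pi.mul_apply, Pi.div_apply, hpow _ _ hp, hpow _ _ hq] at hholder
  calc (∫⁻ x, k x * F x ∂μ) ^ p
      ≤ ((∫⁻ x, k x * (F x / h x) ^ p ∂μ) ^ (1 / p) *
          (∫⁻ x, k x * h x ^ q ∂μ) ^ (1 / q)) ^ p := by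
        rw [lintegral_congr_ae hfactor]; gcongr
    _ = _ := by
        rw [ENNReal.mul_rpow_of_nonneg _ _ hp.le, ← ENNReal.rpow_mul, ← ENNReal.rpow_mul,
          one_div_mul_cancel hp.ne', ENNReal.rpow_one, one_div_mul_eq_div]

theorem lintegral_mul_lintegral_le_of_col [SFinite μ] {K : X → X → ℝ≥0∞}
    (hK : Measurable (Function.uncurry K)) {w G : X → ℝ≥0∞} (hw : Measurable w)
    (hG : AEMeasurable G μ) {B : ℝ≥0∞} (hcol : ∀ᵐ x ∂μ, ∫⁻ y, K y x * w y ∂μ ≤ B * w x) :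
    ∫⁻ y, w y * ∫⁻ x, K y x * G x ∂μ ∂μ ≤ B * ∫⁻ x, w x * G x ∂μ := by
  have hKG : ∀ y, AEMeasurable (fun x => K y x * G x) μ := fun y =>
    hK.of_uncurry_left.aemeasurable.mul hG
  have hKw : ∀ x, AEMeasurable (fun y => K y x * w y) μ := fun x =>
    (hK.of_uncurry_right.mul hw).aemeasurable
  calc ∫⁻ y, w y * ∫⁻ x, K y x * G x ∂μ ∂μ = ∫⁻ y, ∫⁻ x, K y x * w y * G x ∂μ ∂μ := by
        refine lintegral_congr fun y => ?_
        rw [← lintegral_const_mul'' _ (hKG y)]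
        exact lintegral_congr fun x => by ring
    _ = ∫⁻ x, (∫⁻ y, K y x * w y ∂μ) * G x ∂μ := by
        rw [lintegral_lintegral_swap ((hK.mul (hw.comp measurable_fst)).aemeasurable.mul
          hG.comp_snd)]
        exact lintegral_congr fun x => lintegral_mul_const'' _ (hKw x)
    _ ≤ ∫⁻ x, B * w x * G x ∂μ :=
        lintegral_mono_ae (by filter_upwards [hcol] with x hx; gcongr)
    _ = B * ∫⁻ x, w x * G x ∂μ := by
        simp_rw [mul_assoc B]
        exact lintegral_const_mul'' _ (hw.aemeasurable.mul hG)

theorem lintegral_rpow_lintegral_mul_le_of_schur [SFinite μ] (hpq : p.HolderConjugate q)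
    {K : X → X → ℝ≥0∞} (hK : Measurable (Function.uncurry K)) {h : X → ℝ≥0∞} (hh : Measurable h)
    (hh0 : ∀ᵐ x ∂μ, h x ≠ 0) (hhtop : ∀ᵐ x ∂μ, h x ≠ ∞) {A B : ℝ≥0∞} (hA : A ≠ ∞)
    (hrow : ∀ᵐ y ∂μ, ∫⁻ x, K y x * h x ^ q ∂μ ≤ A * h y ^ q)
    (hcol : ∀ᵐ x ∂μ, ∫⁻ y, K y x * h y ^ p ∂μ ≤ B * h x ^ p)
    {F : X → ℝ≥0∞} (hF : AEMeasurable F μ) :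
    ∫⁻ y, (∫⁻ x, K y x * F x ∂μ) ^ p ∂μ ≤ A ^ (p / q) * B * ∫⁻ x, F x ^ p ∂μ := by
  have hp := hpq.pos
  have hq := hpq.symm.pos
  have hrow' : ∀ᵐ y ∂μ, (∫⁻ x, K y x * h x ^ q ∂μ) ^ (p / q) ≤ A ^ (p / q) * h y ^ p := by
    filter_upwards [hrow] with y hy
    calc (∫⁻ x, K y x * h x ^ q ∂μ) ^ (p / q) ≤ (A * h y ^ q) ^ (p / q) := by gcongr
      _ = A ^ (p / q) * h y ^ p := by
        rw [ENNReal.mul_rpow_of_nonneg _ _ (by positivity), ← ENNReal.rpow_mul,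
          mul_div_cancel₀ p hq.ne']
  have hhF : ∀ᵐ x ∂μ, h x ^ p * (F x / h x) ^ p = F x ^ p := by
    filter_upwards [hh0, hhtop] with x hx0 hxtop
    rw [← ENNReal.mul_rpow_of_nonneg _ _ hp.le, ENNReal.mul_div_cancel hx0 hxtop]
  calc ∫⁻ y, (∫⁻ x, K y x * F x ∂μ) ^ p ∂μ
      ≤ ∫⁻ y, A ^ (p / q) * (h y ^ p * ∫⁻ x, K y x * (F x / h x) ^ p ∂μ) ∂μ := by
        refine lintegral_mono_ae ?_
        filter_upwards [hrow'] with y hy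
        refine (lintegral_mul_rpow_le_of_weight hpq hK.of_uncurry_left.aemeasurable hF
          hh.aemeasurable hh0 hhtop).trans ?_
        rw [← mul_assoc, mul_comm]
        gcongr
    _ ≤ A ^ (p / q) * (B * ∫⁻ x, h x ^ p * (F x / h x) ^ p ∂μ) := by
        rw [lintegral_const_mul' _ _ (ENNReal.rpow_ne_top_of_nonneg (by positivity) hA)]
        gcongr
        exact lintegral_mul_lintegral_le_of_col hK (hh.pow_const p)
          ((hF.div hh.aemeasurable).pow_const p) hcol
    _ = A ^ (p / q) * B * ∫⁻ x, F x ^ p ∂μ := by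
        rw [lintegral_congr_ae hhF, mul_assoc]

theorem eLpNorm_lintegral_mul_le_of_schur [SFinite μ] (hpq : p.HolderConjugate q)
    {K : X → X → ℝ≥0∞} (hK : Measurable (Function.uncurry K)) {h : X → ℝ≥0∞} (hh : Measurable h)
    (hh0 : ∀ᵐ x ∂μ, h x ≠ 0) (hhtop : ∀ᵐ x ∂μ, h x ≠ ∞) {A B : ℝ≥0∞} (hA : A ≠ ∞)
    (hrow : ∀ᵐ y ∂μ, ∫⁻ x, K y x * h x ^ q ∂μ ≤ A * h y ^ q)
    (hcol : ∀ᵐ x ∂μ, ∫⁻ y, K y x * h y ^ p ∂μ ≤ B * h x ^ p)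
    {F : X → ℝ≥0∞} (hF : AEMeasurable F μ) :
    eLpNorm (fun y => ∫⁻ x, K y x * F x ∂μ) (ENNReal.ofReal p) μ ≤
      A ^ (1 / q) * B ^ (1 / p) * eLpNorm F (ENNReal.ofReal p) μ := by
  have hp := hpq.pos
  have hp0 : ENNReal.ofReal p ≠ 0 := by simpa using hp
  simp only [eLpNorm_eq_lintegral_rpow_enorm_toReal hp0 ofReal_ne_top, enorm_eq_self,
    toReal_ofReal hp.le]
  calc (∫⁻ y, (∫⁻ x, K y x * F x ∂μ) ^ p ∂μ) ^ (1 / p)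
      ≤ (A ^ (p / q) * B * ∫⁻ x, F x ^ p ∂μ) ^ (1 / p) := by
        gcongr
        exact lintegral_rpow_lintegral_mul_le_of_schur hpq hK hh hh0 hhtop hA hrow hcol hF
    _ = A ^ (1 / q) * B ^ (1 / p) * (∫⁻ x, F x ^ p ∂μ) ^ (1 / p) := by
        rw [ENNReal.mul_rpow_of_nonneg _ _ (by positivity),
          ENNReal.mul_rpow_of_nonneg _ _ (by positivity), ← ENNReal.rpow_mul]
        congr 3
        field_simp

end Schur

instance (m : ℝ) : SFinite (mu15 m) := by
  unfold mu15; infer_instance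

theorem lintegral_mu15 (m : ℝ) (g : ℝ → ℝ≥0∞) :
    ∫⁻ y, g y ∂mu15 m = ∫⁻ y in Ioi 0, ENNReal.ofReal (y ^ m) * g y := by
  rw [mu15, restrict_withDensity measurableSet_Ioi,
    lintegral_withDensity_eq_lintegral_mul_non_measurable _ (by fun_prop)
      (Filter.Eventually.of_forall fun _ => ofReal_lt_top)]
  rfl

theorem ae_mu15_pos (m : ℝ) : ∀ᵐ y ∂mu15 m, 0 < y :=
  ae_restrict_mem measurableSet_Ioi

theorem exists_schur_exponent {c p m : ℝ} (hc : -1 < c) (hp : 1 < p) (hm1 : 0 < (m + 1) / p)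
    (hm2 : (m + 1) / p < c + 1) :
    ∃ σ : ℝ, 0 ≤ σ * p.conjExponent ∧ σ * p.conjExponent < c + 1 ∧
      0 ≤ c + (σ * p - m) ∧ σ * p - m < 1 := by
  have hp0 : 0 < p := by linarith
  have hq0 : 0 < p.conjExponent := (Real.HolderConjugate.conjExponent hp).symm.pos
  rw [div_pos_iff_of_pos_right hp0] at hm1
  rw [div_lt_iff₀ hp0] at hm2
  refine ⟨max 0 ((m - c) / p), by positivity, ?_, ?_, ?_⟩
  · have hq : (m - c) / p * p.conjExponent = (m - c) / (p - 1) := by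
      rw [Real.conjExponent]; field_simp
    rw [max_mul_of_nonneg _ _ hq0.le, zero_mul, max_lt_iff, hq, div_lt_iff₀ (by linarith)]
    constructor <;> nlinarith
  · rw [max_mul_of_nonneg _ _ hp0.le, zero_mul, div_mul_cancel₀ _ hp0.ne']
    linarith [le_max_right 0 (m - c)]
  · rw [max_mul_of_nonneg _ _ hp0.le, zero_mul, div_mul_cancel₀ _ hp0.ne', sub_lt_iff_lt_add,
      max_lt_iff]
    constructor <;> linarith

theorem ofReal_rpow_neg_rpow {x : ℝ} (σ : ℝ) {r : ℝ} (hx : 0 < x) (hr : 0 ≤ r) :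
    ENNReal.ofReal (x ^ (-σ)) ^ r = ENNReal.ofReal (x ^ (-(σ * r))) := by
  rw [ENNReal.ofReal_rpow_of_nonneg (by positivity) hr, ← rpow_mul hx.le, neg_mul]

section Kernel

variable {κ c m C t : ℝ}

theorem enorm_setIntegral_le_lintegral_mu15 {y : ℝ} {pB : ℝ → ℝ → ℝ → ℂ}
    (hker : ∀ ρ > 0, ‖pB t y ρ‖ ≤ C * ρ ^ (-c) * gaussMajorant κ c t y ρ) (f : ℝ → ℂ) :
    ‖∫ ρ in Ioi 0, pB t y ρ * f ρ * ((ρ ^ c : ℝ) : ℂ)‖ₑ ≤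
      ∫⁻ ρ, ENNReal.ofReal (C * gaussMajorant κ c t y ρ * ρ ^ (-m)) * ‖f ρ‖ₑ ∂mu15 m := by
  rw [lintegral_mu15]
  refine (enorm_integral_le_lintegral_enorm _).trans (setLIntegral_mono' measurableSet_Ioi ?_)
  intro ρ hρ
  have hρ0 : 0 < ρ := hρ
  have hcancel : C * ρ ^ (-c) * gaussMajorant κ c t y ρ * ρ ^ c =
      ρ ^ m * (C * gaussMajorant κ c t y ρ * ρ ^ (-m)) := by
    rw [rpow_neg hρ0.le, rpow_neg hρ0.le]
    field_simp
  have hbound := hker ρ hρ0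
  have hnonneg : 0 ≤ C * ρ ^ (-c) * gaussMajorant κ c t y ρ := (norm_nonneg _).trans hbound
  calc ‖pB t y ρ * f ρ * ((ρ ^ c : ℝ) : ℂ)‖ₑ
      = ENNReal.ofReal ‖pB t y ρ‖ * ‖f ρ‖ₑ * ENNReal.ofReal (ρ ^ c) := by
        rw [enorm_mul, enorm_mul, ← ofReal_norm, ← ofReal_norm (((ρ ^ c : ℝ) : ℂ)),
          Complex.norm_real, norm_of_nonneg (rpow_nonneg hρ0.le c)]
    _ ≤ ENNReal.ofReal (C * ρ ^ (-c) * gaussMajorant κ c t y ρ) * ‖f ρ‖ₑ *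
          ENNReal.ofReal (ρ ^ c) := by gcongr
    _ = ENNReal.ofReal (ρ ^ m) * (ENNReal.ofReal (C * gaussMajorant κ c t y ρ * ρ ^ (-m)) *
          ‖f ρ‖ₑ) := by
        rw [mul_right_comm, ← ENNReal.ofReal_mul hnonneg, hcancel,
          ENNReal.ofReal_mul (rpow_nonneg hρ0.le m), mul_assoc]

theorem lintegral_mu15_kernel_mul_rpow_le_of_row (hC : 0 ≤ C) {σ q A y : ℝ} (hq : 0 ≤ q)
    (hy : 0 < y)
    (hrow : ∫⁻ ρ in Ioi 0, ENNReal.ofReal (gaussMajorant κ c t y ρ * ρ ^ (-(σ * q))) ≤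
      ENNReal.ofReal (A * y ^ (-(σ * q)))) :
    ∫⁻ ρ, ENNReal.ofReal (C * gaussMajorant κ c t y ρ * ρ ^ (-m)) *
        ENNReal.ofReal (ρ ^ (-σ)) ^ q ∂mu15 m ≤
      ENNReal.ofReal (C * A) * ENNReal.ofReal (y ^ (-σ)) ^ q := by
  have hintegrand : ∀ ρ ∈ Ioi (0 : ℝ),
      ENNReal.ofReal (ρ ^ m) * (ENNReal.ofReal (C * gaussMajorant κ c t y ρ * ρ ^ (-m)) *
        ENNReal.ofReal (ρ ^ (-σ)) ^ q) =
      ENNReal.ofReal C * ENNReal.ofReal (gaussMajorant κ c t y ρ * ρ ^ (-(σ * q))) := by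
    intro ρ hρ
    have hρ0 : 0 < ρ := hρ
    rw [ofReal_rpow_neg_rpow σ hρ0 hq, ← ENNReal.ofReal_mul' (by positivity),
      ← ENNReal.ofReal_mul (by positivity), ← ENNReal.ofReal_mul hC, rpow_neg hρ0.le m]
    congr 1
    field_simp
  rw [lintegral_mu15, setLIntegral_congr_fun measurableSet_Ioi hintegrand,
    lintegral_const_mul' _ _ ofReal_ne_top, ofReal_rpow_neg_rpow σ hy hq,
    ← ENNReal.ofReal_mul' (by positivity)]
  calc ENNReal.ofReal C *
        ∫⁻ ρ in Ioi 0, ENNReal.ofReal (gaussMajorant κ c t y ρ * ρ ^ (-(σ * q)))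
      ≤ ENNReal.ofReal C * ENNReal.ofReal (A * y ^ (-(σ * q))) := by gcongr
    _ = ENNReal.ofReal (C * A * y ^ (-(σ * q))) := by rw [← ENNReal.ofReal_mul hC, mul_assoc]

theorem lintegral_mu15_kernel_mul_rpow_le_of_col (hC : 0 ≤ C) {σ p A ρ : ℝ} (hp : 0 ≤ p)
    (hρ : 0 < ρ)
    (hcol : ∫⁻ y in Ioi 0, ENNReal.ofReal (gaussMajorant κ c t y ρ * y ^ (-(σ * p - m))) ≤
      ENNReal.ofReal (A * ρ ^ (-(σ * p - m)))) :
    ∫⁻ y, ENNReal.ofReal (C * gaussMajorant κ c t y ρ * ρ ^ (-m)) *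
        ENNReal.ofReal (y ^ (-σ)) ^ p ∂mu15 m ≤
      ENNReal.ofReal (C * A) * ENNReal.ofReal (ρ ^ (-σ)) ^ p := by
  have hCρ : 0 ≤ C * ρ ^ (-m) := mul_nonneg hC (rpow_nonneg hρ.le _)
  have hintegrand : ∀ y ∈ Ioi (0 : ℝ),
      ENNReal.ofReal (y ^ m) * (ENNReal.ofReal (C * gaussMajorant κ c t y ρ * ρ ^ (-m)) *
        ENNReal.ofReal (y ^ (-σ)) ^ p) =
      ENNReal.ofReal (C * ρ ^ (-m)) *
        ENNReal.ofReal (gaussMajorant κ c t y ρ * y ^ (-(σ * p - m))) := by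
    intro y hy
    have hy0 : 0 < y := hy
    rw [ofReal_rpow_neg_rpow σ hy0 hp, ← ENNReal.ofReal_mul' (by positivity),
      ← ENNReal.ofReal_mul (by positivity), ← ENNReal.ofReal_mul hCρ,
      show -(σ * p - m) = m + -(σ * p) by ring, rpow_add hy0]
    congr 1
    ring
  rw [lintegral_mu15, setLIntegral_congr_fun measurableSet_Ioi hintegrand,
    lintegral_const_mul' _ _ ofReal_ne_top, ofReal_rpow_neg_rpow σ hρ hp,
    ← ENNReal.ofReal_mul' (by positivity)]
  calc ENNReal.ofReal (C * ρ ^ (-m)) *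
        ∫⁻ y in Ioi 0, ENNReal.ofReal (gaussMajorant κ c t y ρ * y ^ (-(σ * p - m)))
      ≤ ENNReal.ofReal (C * ρ ^ (-m)) * ENNReal.ofReal (A * ρ ^ (-(σ * p - m))) := by gcongr
    _ = ENNReal.ofReal (C * A * ρ ^ (-(σ * p))) := by
        rw [← ENNReal.ofReal_mul hCρ]
        congr 1
        rw [show -(σ * p) = -m + -(σ * p - m) by ring, rpow_add hρ]
        ring

theorem eLpNorm_lintegral_mu15_kernel_le (hC : 0 ≤ C) {p q σ A₁ A₂ : ℝ}
    (hpq : p.HolderConjugate q)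
    (hrow : ∀ y > 0, ∫⁻ ρ in Ioi 0, ENNReal.ofReal (gaussMajorant κ c t y ρ * ρ ^ (-(σ * q))) ≤
      ENNReal.ofReal (A₁ * y ^ (-(σ * q))))
    (hcol : ∀ ρ > 0,
      ∫⁻ y in Ioi 0, ENNReal.ofReal (gaussMajorant κ c t y ρ * y ^ (-(σ * p - m))) ≤
        ENNReal.ofReal (A₂ * ρ ^ (-(σ * p - m))))
    {F : ℝ → ℝ≥0∞} (hF : AEMeasurable F (mu15 m)) :
    eLpNorm
        (fun y => ∫⁻ ρ, ENNReal.ofReal (C * gaussMajorant κ c t y ρ * ρ ^ (-m)) * F ρ ∂mu15 m)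
        (ENNReal.ofReal p) (mu15 m) ≤
      ENNReal.ofReal (C * A₁) ^ (1 / q) * ENNReal.ofReal (C * A₂) ^ (1 / p) *
        eLpNorm F (ENNReal.ofReal p) (mu15 m) :=
  eLpNorm_lintegral_mul_le_of_schur hpq (by unfold gaussMajorant; fun_prop)
    (h := fun y => ENNReal.ofReal (y ^ (-σ))) (by fun_prop)
    (by filter_upwards [ae_mu15_pos m] with y hy using (ofReal_pos.2 (by positivity)).ne')
    (by simp) ofReal_ne_top
    (by filter_upwards [ae_mu15_pos m] with y hy using
      lintegral_mu15_kernel_mul_rpow_le_of_row hC hpq.symm.nonneg hy (hrow y hy))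
    (by filter_upwards [ae_mu15_pos m] with ρ hρ using
      lintegral_mu15_kernel_mul_rpow_le_of_col hC hpq.nonneg hρ (hcol ρ hρ))
    hF

end Kernel

end BesselHeat

open BesselHeat

/-- If the Bessel heat kernel `p_B` satisfies the Gaussian-type bound
`|p_B(t,y,ρ)| ≤ C t^{−1/2} ρ^{−c} ((ρ/√t) ∧ 1)^c exp(−|y−ρ|²/(κt))`, then for each
`t > 0` the integral operator `f ↦ ∫₀^∞ p_B(t,·,ρ) f(ρ) ρ^c dρ` is bounded on
`L^p((0,∞), y^m dy)` for `1 < p < ∞` with `0 < (m+1)/p < c+1`, with norm uniform in `t`. -/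
theorem stmt_15 (c p m C κ : ℝ) (hc : -1 < c) (hp : 1 < p)
    (hm1 : 0 < (m + 1) / p) (hm2 : (m + 1) / p < c + 1) (hC : 0 < C) (hκ : 0 < κ)
    (pB : ℝ → ℝ → ℝ → ℂ)
    (hker : ∀ t > (0 : ℝ), ∀ y > (0 : ℝ), ∀ ρ > (0 : ℝ),
      ‖pB t y ρ‖ ≤ C * t ^ (-(1 : ℝ) / 2) * ρ ^ (-c) * (min (ρ / Real.sqrt t) 1) ^ c *
        Real.exp (-(y - ρ) ^ 2 / (κ * t))) :
    ∃ M : NNReal, ∀ t > (0 : ℝ), ∀ f : ℝ → ℂ,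
      MemLp f (ENNReal.ofReal p) (mu15 m) →
      eLpNorm (fun y => ∫ ρ in Ioi (0 : ℝ), pB t y ρ * f ρ * ((ρ ^ c : ℝ) : ℂ))
          (ENNReal.ofReal p) (mu15 m) ≤
        M * eLpNorm f (ENNReal.ofReal p) (mu15 m) := by
  have hpq : p.HolderConjugate p.conjExponent := .conjExponent hp
  obtain ⟨σ, hσq₀, hσq, hσp₀, hσp⟩ := exists_schur_exponent hc hp hm1 hm2
  obtain ⟨A₁, hA₁⟩ := exists_setLIntegral_gaussMajorant_mul_rpow_le_row hκ hσq₀ hσq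
  obtain ⟨A₂, hA₂⟩ := exists_setLIntegral_gaussMajorant_mul_rpow_le_col hκ hσp hσp₀
  set M := ENNReal.ofReal (C * A₁) ^ (1 / p.conjExponent) * ENNReal.ofReal (C * A₂) ^ (1 / p)
  have hM : M ≠ ∞ := mul_ne_top
    (rpow_ne_top_of_nonneg (one_div_nonneg.2 hpq.symm.nonneg) ofReal_ne_top)
    (rpow_ne_top_of_nonneg (one_div_nonneg.2 hpq.nonneg) ofReal_ne_top)
  refine ⟨M.toNNReal, fun t ht f hf => ?_⟩
  rw [ENNReal.coe_toNNReal hM, ← eLpNorm_enorm f]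
  refine le_trans (eLpNorm_mono_enorm_ae ?_)
    (eLpNorm_lintegral_mu15_kernel_le hC.le hpq (hA₁ t ht) (hA₂ t ht) hf.1.enorm)
  filter_upwards [ae_mu15_pos m] with y hy
  refine enorm_setIntegral_le_lintegral_mu15 (fun ρ hρ => (hker t ht y hy ρ hρ).trans_eq ?_) f
  rw [gaussMajorant]
  ring
end

section
/- Under the assumptions α < 2, α⁻ < (m+1)/p < c + 1 − α, and with R_λ(ξ) as above, for distinct indices j₁,…,j_n ∈ {1,…,N} the mixed partial derivative satisfies D_{ξ_{j₁}}⋯D_{ξ_{j_n}} R_λ(ξ) = Σ_{σ ∈ S_n} R_λ(ξ) ∏_{k=1}^n ( 2i a_{j_{σ(k)}} y^α D_y R_λ(ξ) − 2 ξ_{j_{σ(k)}} y^α R_λ(ξ) ), as an identity in B(L^p_m) for ξ ≠ 0, where S_n is the symmetric group on n elements and the product is taken in the indicated order. -/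
open Complex


section Aux

variable {𝕜 : Type*} [NontriviallyNormedField 𝕜] {E : Type*} [NormedAddCommGroup E]
  [NormedSpace 𝕜 E] {𝔸 : Type*} [NormedRing 𝔸] [NormedAlgebra 𝕜 𝔸]

theorem aux_fderiv_mul_apply {f g : E → 𝔸} {x : E} (hf : DifferentiableAt 𝕜 f x)
    (hg : DifferentiableAt 𝕜 g x) (w : E) :
    fderiv 𝕜 (fun y => f y * g y) x w =
      fderiv 𝕜 f x w * g x + f x * fderiv 𝕜 g x w := by
  rw [show (fun y => f y * g y) = f * g from rfl, (hf.hasFDerivAt.mul' hg.hasFDerivAt).fderiv]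
  simp [smul_eq_mul, add_comm]

theorem aux_diff_ofFn_prod : ∀ {m : ℕ} (G : Fin m → E → 𝔸) (x : E),
    (∀ p, DifferentiableAt 𝕜 (G p) x) →
    DifferentiableAt 𝕜 (fun y => (List.ofFn fun k => G k y).prod) x := by
  intro m
  induction m with
  | zero => intro G x hG; simp
  | succ m ih =>
    intro G x hG
    have h : (fun y => (List.ofFn fun k => G k y).prod)
        = fun y => G 0 y * (List.ofFn fun k : Fin m => G k.succ y).prod := by
      funext y; simp [List.ofFn_succ]
    rw [h]
    exact (hG 0).mul (ih _ x fun p => hG p.succ)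

theorem aux_list_leibniz : ∀ {m : ℕ} (G : Fin m → E → 𝔸) (x : E),
    (∀ p, DifferentiableAt 𝕜 (G p) x) → ∀ w : E,
    fderiv 𝕜 (fun y => (List.ofFn fun k => G k y).prod) x w =
      ∑ p : Fin m, (List.ofFn (Function.update (fun k => G k x) p
        (fderiv 𝕜 (G p) x w))).prod := by
  intro m
  induction m with
  | zero => intro G x hG w; simp
  | succ m ih =>
    intro G x hG w
    have h : (fun y => (List.ofFn fun k => G k y).prod)
        = fun y => G 0 y * (List.ofFn fun k : Fin m => G k.succ y).prod := by
      funext y; simp [List.ofFn_succ]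
    rw [h, aux_fderiv_mul_apply (hG 0) (aux_diff_ofFn_prod _ x fun p => hG p.succ) w,
      ih _ x (fun p => hG p.succ) w, Fin.sum_univ_succ, Finset.mul_sum]
    congr 1
    · simp [List.ofFn_succ, Function.update_apply, Fin.succ_ne_zero]
    · refine Finset.sum_congr rfl fun q _ => ?_
      have h0 : Function.update (fun k => G k x) q.succ (fderiv 𝕜 (G q.succ) x w) 0 = G 0 x := by
        simp [Function.update_apply, Ne.symm (Fin.succ_ne_zero q)]
      have ht : (fun i : Fin m =>
            Function.update (fun k => G k x) q.succ (fderiv 𝕜 (G q.succ) x w) i.succ)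
          = Function.update (fun k : Fin m => G k.succ x) q (fderiv 𝕜 (G q.succ) x w) := by
        funext i; simp [Function.update_apply, Fin.succ_inj]
      rw [List.ofFn_succ, List.prod_cons, h0, ht]

end Aux


section Comb

variable {β : Type*}

theorem aux_insertNth_succ_zero {n : ℕ} (q : Fin (n + 1)) (y : β) (u : Fin (n + 1) → β) :
    Fin.insertNth (α := fun _ => β) q.succ y u 0 = u 0 := by
  have h0 : q.succ.succAbove 0 = 0 := by
    rw [Fin.succAbove_of_castSucc_lt]
    · rfl
    · simp
  conv_lhs => rw [← h0]
  exact Fin.insertNth_apply_succAbove (α := fun _ => β) q.succ y u 0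

theorem aux_insertNth_succ_succ {n : ℕ} (q : Fin (n + 1)) (y : β) (u : Fin (n + 1) → β)
    (k : Fin (n + 1)) :
    Fin.insertNth (α := fun _ => β) q.succ y u k.succ =
      Fin.insertNth (α := fun _ => β) q y (fun m => u m.succ) k := by
  refine Fin.succAboveCases q ?_ ?_ k
  · rw [Fin.insertNth_apply_same, Fin.insertNth_apply_same]
  · intro m
    rw [← Fin.succ_succAbove_succ, Fin.insertNth_apply_succAbove, Fin.insertNth_apply_succAbove]

theorem aux_ofFn_update_mul {𝔸 : Type*} [Monoid 𝔸] :
    ∀ {n : ℕ} (u : Fin n → 𝔸) (q : Fin n) (y : 𝔸),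
    (List.ofFn (Function.update u q (u q * y))).prod =
      (List.ofFn (Fin.insertNth (α := fun _ => 𝔸) q.succ y u)).prod := by
  intro n
  induction n with
  | zero => exact fun u q y => q.elim0
  | succ n ih =>
    intro u q y
    refine Fin.cases ?_ ?_ q
    · have ht : (fun k : Fin (n+1) => Fin.insertNth (α := fun _ => 𝔸) (0 : Fin (n+1)).succ y u k.succ)
          = Fin.cons y (fun m => u m.succ) := by
        funext k
        rw [aux_insertNth_succ_succ, Fin.insertNth_zero']
      rw [List.ofFn_succ, List.ofFn_succ, List.prod_cons, List.prod_cons,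
        aux_insertNth_succ_zero, ht]
      simp [List.ofFn_succ, Function.update_apply, Fin.succ_ne_zero, mul_assoc]
    · intro r
      have h0 : Function.update u r.succ (u r.succ * y) 0 = u 0 := by
        simp [Function.update_apply, Ne.symm (Fin.succ_ne_zero r)]
      have ht : (fun k : Fin n => Function.update u r.succ (u r.succ * y) k.succ)
          = Function.update (fun m => u m.succ) r ((fun m : Fin n => u m.succ) r * y) := by
        funext k; simp [Function.update_apply, Fin.succ_inj]
      have ht2 : (fun k : Fin (n+1) => Fin.insertNth (α := fun _ => 𝔸) r.succ.succ y u k.succ)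
          = Fin.insertNth (α := fun _ => 𝔸) r.succ y (fun m => u m.succ) := by
        funext k; rw [aux_insertNth_succ_succ]
      rw [List.ofFn_succ, List.ofFn_succ, List.prod_cons, List.prod_cons, h0,
        aux_insertNth_succ_zero, ht, ht2, ih]

def permIns {n : ℕ} (p : Fin (n + 1)) (σ : Equiv.Perm (Fin n)) : Equiv.Perm (Fin (n + 1)) :=
  ((finSuccEquiv' p).trans σ.optionCongr).trans (finSuccEquiv' 0).symm

theorem permIns_apply_self {n : ℕ} (p : Fin (n + 1)) (σ : Equiv.Perm (Fin n)) :
    permIns p σ p = 0 := by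
  simp [permIns, finSuccEquiv'_at, finSuccEquiv'_symm_none]

theorem permIns_apply_succAbove {n : ℕ} (p : Fin (n + 1)) (σ : Equiv.Perm (Fin n)) (m : Fin n) :
    permIns p σ (p.succAbove m) = (σ m).succ := by
  simp [permIns, finSuccEquiv'_succAbove, finSuccEquiv'_symm_some, Fin.zero_succAbove]

theorem permIns_bijective {n : ℕ} :
    Function.Bijective (fun pσ : Fin (n + 1) × Equiv.Perm (Fin n) => permIns pσ.1 pσ.2) := by
  rw [Fintype.bijective_iff_injective_and_card]
  constructor
  · rintro ⟨p, σ⟩ ⟨p', σ'⟩ h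
    simp only at h
    have hp : p = p' := by
      by_contra hne
      obtain ⟨m, hm⟩ := Fin.exists_succAbove_eq hne
      have h1 : permIns p σ p = permIns p' σ' p := by rw [h]
      rw [permIns_apply_self, ← hm, permIns_apply_succAbove] at h1
      exact Fin.succ_ne_zero _ h1.symm
    subst hp
    have hσ : σ = σ' := by
      ext m
      have h1 : permIns p σ (p.succAbove m) = permIns p σ' (p.succAbove m) := by rw [h]
      rw [permIns_apply_succAbove, permIns_apply_succAbove] at h1
      exact congrArg Fin.val (Fin.succ_injective _ h1)
    rw [hσ]
  · simp [Fintype.card_perm, Nat.factorial_succ]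

theorem perm_decomp {n : ℕ} {M : Type*} [AddCommMonoid M] (f : Equiv.Perm (Fin (n + 1)) → M) :
    ∑ τ : Equiv.Perm (Fin (n + 1)), f τ =
      ∑ p : Fin (n + 1), ∑ σ : Equiv.Perm (Fin n), f (permIns p σ) := by
  have h := Fintype.sum_bijective _ (permIns_bijective (n := n))
    (fun pσ : Fin (n + 1) × Equiv.Perm (Fin n) => f (permIns pσ.1 pσ.2)) f (fun pσ => rfl)
  rw [← h, Fintype.sum_prod_type]

end Comb

/-- Iterated mixed partial derivative formula of Lemma 4.2: if `R, A, DR` (representing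
`R_λ(ξ)`, `y^α R_λ(ξ)` and `y^α D_y R_λ(ξ)` in `B(L^p_m)`) are smooth away from `0` and
satisfy the first-order derivative identity
`D_{ξ_j} R(ξ) = R(ξ)(2i a_j DR(ξ) − 2ξ_j A(ξ))` (and likewise for `A` and `DR`), then for
distinct indices `j₁,…,j_n`,
`D_{ξ_{j₁}}⋯D_{ξ_{j_n}} R(ξ) = ∑_{σ∈S_n} R(ξ) ∏_k (2i a_{j_{σ(k)}} DR(ξ) − 2ξ_{j_{σ(k)}} A(ξ))`. -/
theorem stmt_19 {N : ℕ} {X : Type*} [NormedAddCommGroup X] [NormedSpace ℂ X]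
    (a : Fin N → ℝ)
    (R A DR : EuclideanSpace ℝ (Fin N) → X →L[ℂ] X)
    (hRsm : ContDiffOn ℝ (⊤ : ℕ∞) R {ζ : EuclideanSpace ℝ (Fin N) | ζ ≠ 0})
    (hAsm : ContDiffOn ℝ (⊤ : ℕ∞) A {ζ : EuclideanSpace ℝ (Fin N) | ζ ≠ 0})
    (hDRsm : ContDiffOn ℝ (⊤ : ℕ∞) DR {ζ : EuclideanSpace ℝ (Fin N) | ζ ≠ 0})
    (hdR : ∀ ζ : EuclideanSpace ℝ (Fin N), ζ ≠ 0 → ∀ jj : Fin N,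
      fderiv ℝ R ζ (EuclideanSpace.single jj 1) =
        R ζ * ((2 * Complex.I * ((a jj : ℝ) : ℂ)) • DR ζ - ((2 * ζ jj : ℝ) : ℂ) • A ζ))
    (hdA : ∀ ζ : EuclideanSpace ℝ (Fin N), ζ ≠ 0 → ∀ jj : Fin N,
      fderiv ℝ A ζ (EuclideanSpace.single jj 1) =
        A ζ * ((2 * Complex.I * ((a jj : ℝ) : ℂ)) • DR ζ - ((2 * ζ jj : ℝ) : ℂ) • A ζ))
    (hdDR : ∀ ζ : EuclideanSpace ℝ (Fin N), ζ ≠ 0 → ∀ jj : Fin N,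
      fderiv ℝ DR ζ (EuclideanSpace.single jj 1) =
        DR ζ * ((2 * Complex.I * ((a jj : ℝ) : ℂ)) • DR ζ - ((2 * ζ jj : ℝ) : ℂ) • A ζ))
    (n : ℕ) (j : Fin n → Fin N) (hj : Function.Injective j)
    (ξ : EuclideanSpace ℝ (Fin N)) (hξ : ξ ≠ 0) :
    ((List.ofFn j).foldr
        (fun (jj : Fin N) (F : EuclideanSpace ℝ (Fin N) → X →L[ℂ] X) =>
          fun ζ => fderiv ℝ F ζ (EuclideanSpace.single jj 1)) R) ξ =
      ∑ σ : Equiv.Perm (Fin n),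
        R ξ * (List.ofFn (fun k : Fin n =>
          (2 * Complex.I * ((a (j (σ k)) : ℝ) : ℂ)) • DR ξ -
            ((2 * ξ (j (σ k)) : ℝ) : ℂ) • A ξ)).prod := by
  have hRd : ∀ ζ : EuclideanSpace ℝ (Fin N), ζ ≠ 0 → DifferentiableAt ℝ R ζ := fun ζ hζ =>
    (hRsm.differentiableOn (by simp)).differentiableAt (isOpen_ne.mem_nhds hζ)
  have hSopen : IsOpen {ζ : EuclideanSpace ℝ (Fin N) | ζ ≠ 0} := isOpen_ne
  have hAd : ∀ ζ : EuclideanSpace ℝ (Fin N), ζ ≠ 0 → DifferentiableAt ℝ A ζ := fun ζ hζ =>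
    (hAsm.differentiableOn (by simp)).differentiableAt (hSopen.mem_nhds hζ)
  have hDRd : ∀ ζ : EuclideanSpace ℝ (Fin N), ζ ≠ 0 → DifferentiableAt ℝ DR ζ := fun ζ hζ =>
    (hDRsm.differentiableOn (by simp)).differentiableAt (hSopen.mem_nhds hζ)
  set Mf : EuclideanSpace ℝ (Fin N) → Fin N → (X →L[ℂ] X) :=
    fun ζ i => (2 * Complex.I * ((a i : ℝ) : ℂ)) • DR ζ - ((2 * ζ i : ℝ) : ℂ) • A ζ with hMf
  have hφeq : ∀ i : Fin N, (fun ζ : EuclideanSpace ℝ (Fin N) => ((2 * ζ i : ℝ) : ℂ))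
      = fun ζ => (Complex.ofRealCLM.comp
          ((2 : ℝ) • (EuclideanSpace.proj i : EuclideanSpace ℝ (Fin N) →L[ℝ] ℝ))) ζ := by
    intro i; funext ζ; simp
  have hMd : ∀ (i : Fin N) (ζ : EuclideanSpace ℝ (Fin N)), ζ ≠ 0 →
      DifferentiableAt ℝ (fun ζ => Mf ζ i) ζ := by
    intro i ζ hζ
    simp only [hMf]
    refine DifferentiableAt.fun_sub (((hDRd ζ hζ).fun_const_smul _)) ?_
    refine DifferentiableAt.fun_smul ?_ (hAd ζ hζ)
    rw [hφeq i]
    exact (Complex.ofRealCLM.comp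
      ((2 : ℝ) • (EuclideanSpace.proj i : EuclideanSpace ℝ (Fin N) →L[ℝ] ℝ))).differentiableAt
  have hMderiv : ∀ (i b : Fin N), b ≠ i → ∀ ζ : EuclideanSpace ℝ (Fin N), ζ ≠ 0 →
      fderiv ℝ (fun ζ => Mf ζ i) ζ (EuclideanSpace.single b 1) = Mf ζ i * Mf ζ b := by
    intro i b hbi ζ hζ
    have hA' := (hAd ζ hζ).hasFDerivAt
    have hDR' := (hDRd ζ hζ).hasFDerivAt
    have hc : HasFDerivAt (fun ζ : EuclideanSpace ℝ (Fin N) => ((2 * ζ i : ℝ) : ℂ))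
        (Complex.ofRealCLM.comp
          ((2 : ℝ) • (EuclideanSpace.proj i : EuclideanSpace ℝ (Fin N) →L[ℝ] ℝ))) ζ := by
      rw [hφeq i]
      exact (Complex.ofRealCLM.comp
        ((2 : ℝ) • (EuclideanSpace.proj i : EuclideanSpace ℝ (Fin N) →L[ℝ] ℝ))).hasFDerivAt
    have hM' : HasFDerivAt (fun ζ => Mf ζ i)
        ((2 * Complex.I * ((a i : ℝ) : ℂ)) • fderiv ℝ DR ζ -
          (((2 * ζ i : ℝ) : ℂ) • fderiv ℝ A ζ +
            (Complex.ofRealCLM.comp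
              ((2 : ℝ) • (EuclideanSpace.proj i : EuclideanSpace ℝ (Fin N) →L[ℝ] ℝ))).smulRight
                (A ζ))) ζ := by
      simp only [hMf]
      exact ((hDR'.fun_const_smul _).fun_sub (hc.fun_smul hA'))
    rw [hM'.fderiv]
    have hci0 : (Complex.ofRealCLM.comp
        ((2 : ℝ) • (EuclideanSpace.proj i : EuclideanSpace ℝ (Fin N) →L[ℝ] ℝ)))
          (EuclideanSpace.single b 1) = 0 := by
      simp [EuclideanSpace.single_apply, Ne.symm hbi]
    simp only [ContinuousLinearMap.coe_sub', Pi.sub_apply, ContinuousLinearMap.add_apply,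
      ContinuousLinearMap.coe_smul', Pi.smul_apply, ContinuousLinearMap.smulRight_apply, hci0,
      zero_smul, add_zero]
    rw [hdDR ζ hζ b, hdA ζ hζ b]
    simp only [hMf]
    simp [smul_mul_assoc, sub_mul]
  have hRderiv : ∀ (b : Fin N) (ζ : EuclideanSpace ℝ (Fin N)), ζ ≠ 0 →
      fderiv ℝ R ζ (EuclideanSpace.single b 1) = R ζ * Mf ζ b := by
    intro b ζ hζ
    simp only [hMf]
    exact hdR ζ hζ b
  suffices key : ∀ (n : ℕ) (j : Fin n → Fin N), Function.Injective j →
      ∀ ζ : EuclideanSpace ℝ (Fin N), ζ ≠ 0 →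
      ((List.ofFn j).foldr
        (fun (jj : Fin N) (F : EuclideanSpace ℝ (Fin N) → X →L[ℂ] X) =>
          fun ζ => fderiv ℝ F ζ (EuclideanSpace.single jj 1)) R) ζ =
        ∑ σ : Equiv.Perm (Fin n), R ζ * (List.ofFn fun k => Mf ζ (j (σ k))).prod by
    simpa only [hMf] using key n j hj ξ hξ
  have hSopen : IsOpen {ζ : EuclideanSpace ℝ (Fin N) | ζ ≠ 0} := isOpen_ne
  intro n
  induction n with
  | zero =>
    intro j hj ζ hζ
    simp
  | succ n ih =>
    intro j hj ζ hζ
    have hj' : Function.Injective (fun k : Fin n => j k.succ) :=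
      fun x y h => Fin.succ_injective _ (hj h)
    have hEq : ((List.ofFn fun i : Fin n => j i.succ).foldr
        (fun (jj : Fin N) (F : EuclideanSpace ℝ (Fin N) → X →L[ℂ] X) =>
          fun ζ => fderiv ℝ F ζ (EuclideanSpace.single jj 1)) R) =ᶠ[nhds ζ]
        (fun ζ => ∑ σ : Equiv.Perm (Fin n),
          R ζ * (List.ofFn fun k => Mf ζ (j (σ k).succ)).prod) :=
      Filter.eventuallyEq_of_mem (hSopen.mem_nhds hζ) (fun ζ' hζ' => ih _ hj' ζ' hζ')
    rw [List.ofFn_succ, List.foldr_cons, hEq.fderiv_eq]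
    have hdiffG : ∀ (σ : Equiv.Perm (Fin n)) (p : Fin (n + 1)),
        DifferentiableAt ℝ
          (Fin.cons (α := fun _ => EuclideanSpace ℝ (Fin N) → (X →L[ℂ] X)) R
            (fun q (ζ : EuclideanSpace ℝ (Fin N)) => Mf ζ (j (σ q).succ)) p) ζ := by
      intro σ p
      refine Fin.cases ?_ ?_ p
      · simp only [Fin.cons_zero]; exact hRd ζ hζ
      · intro q; simp only [Fin.cons_succ]; exact hMd _ ζ hζ
    have hfun : ∀ σ : Equiv.Perm (Fin n),
        (fun ζ : EuclideanSpace ℝ (Fin N) =>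
            R ζ * (List.ofFn fun k => Mf ζ (j (σ k).succ)).prod)
          = fun ζ => (List.ofFn fun p : Fin (n + 1) =>
              Fin.cons (α := fun _ => EuclideanSpace ℝ (Fin N) → (X →L[ℂ] X)) R
                (fun q (ζ : EuclideanSpace ℝ (Fin N)) => Mf ζ (j (σ q).succ)) p ζ).prod := by
      intro σ; funext ζ'; simp [List.ofFn_succ]
    have hsum := fderiv_fun_sum (𝕜 := ℝ) (u := (Finset.univ : Finset (Equiv.Perm (Fin n))))
      (A := fun σ (ζ : EuclideanSpace ℝ (Fin N)) =>
        R ζ * (List.ofFn fun k => Mf ζ (j (σ k).succ)).prod) (x := ζ)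
      (fun σ _ => by
        show DifferentiableAt ℝ (fun ζ : EuclideanSpace ℝ (Fin N) =>
          R ζ * (List.ofFn fun k => Mf ζ (j (σ k).succ)).prod) ζ
        rw [hfun σ]; exact aux_diff_ofFn_prod _ ζ (hdiffG σ))
    rw [hsum, ContinuousLinearMap.sum_apply]
    have hterm : ∀ σ : Equiv.Perm (Fin n),
        fderiv ℝ (fun ζ : EuclideanSpace ℝ (Fin N) =>
            R ζ * (List.ofFn fun k => Mf ζ (j (σ k).succ)).prod) ζ
          (EuclideanSpace.single (j 0) 1)
        = ∑ p : Fin (n + 1), R ζ * (List.ofFn fun k => Mf ζ (j (permIns p σ k))).prod := by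
      intro σ
      rw [hfun σ, aux_list_leibniz _ ζ (hdiffG σ) _]
      refine Finset.sum_congr rfl fun p _ => ?_
      refine Fin.cases ?_ ?_ p
      · -- p = 0
        have hu0 : Function.update
            (fun k => Fin.cons (α := fun _ => EuclideanSpace ℝ (Fin N) → (X →L[ℂ] X)) R
              (fun q (ζ : EuclideanSpace ℝ (Fin N)) => Mf ζ (j (σ q).succ)) k ζ) 0
            (fderiv ℝ (Fin.cons (α := fun _ => EuclideanSpace ℝ (Fin N) → (X →L[ℂ] X)) R
              (fun q (ζ : EuclideanSpace ℝ (Fin N)) => Mf ζ (j (σ q).succ)) 0) ζ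
              (EuclideanSpace.single (j 0) 1)) 0 = R ζ * Mf ζ (j 0) := by
          simp only [Function.update_self, Fin.cons_zero]
          exact hRderiv (j 0) ζ hζ
        have hut : (fun i : Fin n => Function.update
            (fun k => Fin.cons (α := fun _ => EuclideanSpace ℝ (Fin N) → (X →L[ℂ] X)) R
              (fun q (ζ : EuclideanSpace ℝ (Fin N)) => Mf ζ (j (σ q).succ)) k ζ) 0
            (fderiv ℝ (Fin.cons (α := fun _ => EuclideanSpace ℝ (Fin N) → (X →L[ℂ] X)) R
              (fun q (ζ : EuclideanSpace ℝ (Fin N)) => Mf ζ (j (σ q).succ)) 0) ζ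
              (EuclideanSpace.single (j 0) 1)) i.succ)
            = fun i => Mf ζ (j (σ i).succ) := by
          funext i; simp [Function.update_apply, Fin.succ_ne_zero]
        have hp0 : permIns (0 : Fin (n + 1)) σ 0 = 0 := permIns_apply_self _ _
        have hps : ∀ i : Fin n, permIns (0 : Fin (n + 1)) σ i.succ = (σ i).succ := fun i => by
          rw [show (i.succ : Fin (n + 1)) = (0 : Fin (n + 1)).succAbove i from
            (Fin.zero_succAbove i).symm, permIns_apply_succAbove]
        rw [List.ofFn_succ, List.ofFn_succ, List.prod_cons, List.prod_cons, hu0, hut]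
        simp only [hp0, hps]
        rw [mul_assoc]
      · -- p = q.succ
        intro q
        have hu0 : Function.update
            (fun k => Fin.cons (α := fun _ => EuclideanSpace ℝ (Fin N) → (X →L[ℂ] X)) R
              (fun q (ζ : EuclideanSpace ℝ (Fin N)) => Mf ζ (j (σ q).succ)) k ζ) q.succ
            (fderiv ℝ (Fin.cons (α := fun _ => EuclideanSpace ℝ (Fin N) → (X →L[ℂ] X)) R
              (fun q (ζ : EuclideanSpace ℝ (Fin N)) => Mf ζ (j (σ q).succ)) q.succ) ζ
              (EuclideanSpace.single (j 0) 1)) 0 = R ζ := by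
          simp [Function.update_apply, Ne.symm (Fin.succ_ne_zero q)]
        have hX0 : fderiv ℝ (fun ζ : EuclideanSpace ℝ (Fin N) => Mf ζ (j (σ q).succ)) ζ
              (EuclideanSpace.single (j 0) 1) = Mf ζ (j (σ q).succ) * Mf ζ (j 0) :=
          hMderiv _ _ (fun h => Fin.succ_ne_zero (σ q) (hj h).symm) ζ hζ
        have hut : (fun i : Fin n => Function.update
            (fun k => Fin.cons (α := fun _ => EuclideanSpace ℝ (Fin N) → (X →L[ℂ] X)) R
              (fun q (ζ : EuclideanSpace ℝ (Fin N)) => Mf ζ (j (σ q).succ)) k ζ) q.succ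
            (fderiv ℝ (Fin.cons (α := fun _ => EuclideanSpace ℝ (Fin N) → (X →L[ℂ] X)) R
              (fun q (ζ : EuclideanSpace ℝ (Fin N)) => Mf ζ (j (σ q).succ)) q.succ) ζ
              (EuclideanSpace.single (j 0) 1)) i.succ)
            = Function.update (fun i : Fin n => Mf ζ (j (σ i).succ)) q
                (Mf ζ (j (σ q).succ) * Mf ζ (j 0)) := by
          funext i
          simp [Function.update_apply, Fin.succ_inj, hX0]
        have h2 : (List.ofFn (Function.update (fun i : Fin n => Mf ζ (j (σ i).succ)) q
              (Mf ζ (j (σ q).succ) * Mf ζ (j 0)))).prod =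
            (List.ofFn (Fin.insertNth (α := fun _ => (X →L[ℂ] X)) q.succ (Mf ζ (j 0))
              (fun i : Fin n => Mf ζ (j (σ i).succ)))).prod :=
          aux_ofFn_update_mul (fun i : Fin n => Mf ζ (j (σ i).succ)) q (Mf ζ (j 0))
        have hfin : (fun k => Mf ζ (j (permIns q.succ σ k)))
            = Fin.insertNth (α := fun _ => (X →L[ℂ] X)) q.succ (Mf ζ (j 0))
              (fun i : Fin n => Mf ζ (j (σ i).succ)) := by
          funext k
          refine Fin.succAboveCases q.succ ?_ ?_ k
          · rw [permIns_apply_self, Fin.insertNth_apply_same]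
          · intro m
            rw [permIns_apply_succAbove,
              Fin.insertNth_apply_succAbove (α := fun _ => (X →L[ℂ] X))]
        rw [List.ofFn_succ, List.prod_cons, hu0, hut, h2, hfin]
    refine (Finset.sum_congr rfl fun σ _ => hterm σ).trans ?_
    rw [perm_decomp (fun τ : Equiv.Perm (Fin (n + 1)) =>
      R ζ * (List.ofFn fun k => Mf ζ (j (τ k))).prod)]
    exact Finset.sum_comm
end
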